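/- Let m:[0,1]→(0,∞) be continuous, fix x ∈ ℝ, and set ρ_{ni}=1−m(i/n)/log n, u_n(x)=b_n+x/b_n. There is a constant C>0 such that for all sufficiently large n, all 1≤i≤n and all z ∈ ℝ, | Φ( (u_n(x)−ρ_{ni}u_n(z)) / √(1−ρ_{ni}²) ) − Φ( √(m(i/n)) + (x−z)/(2√(m(i/n))) ) | ≤ C(1+|z|)·(log log n)/(log n). -/

import Mathlib

/-!
Put `L = log n`, `μ = m(i/n)` and `ε = μ / L`, so that `ρ = 1 - ε` and `√(1 - ρ²) = √(ε(2 - ε))`.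
The Gaussian tail bounds `exp(-3/2) φ(a) / a ≤ 1 - Φ(a) ≤ φ(a) / a` locate the quantile:
`2L - 4 log L ≤ b_n² ≤ 2L`. With `P = b_n √(ε(2 - ε))` the argument of `Φ` is exactly
`(x - z)/P + P/(2 - ε) + εz/P`, and the quantile bounds give `2√μ (1 - O(log L / L)) ≤ P ≤ 2√μ`.
Hence the argument is within `O((1 + |z|) log L / L)` of `√μ + (x - z)/(2√μ)`, uniformly in `i`
because the continuous `m` is bounded above and away from `0` on `[0, 1]`; finally `Φ` is
`1`-Lipschitz.
-/

open MeasureTheory Filter Real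

/-- The standard Gaussian cumulative distribution function `Φ`. -/
noncomputable def stdCDF (x : ℝ) : ℝ :=
  ∫ t in Set.Iic x, (Real.sqrt (2 * Real.pi))⁻¹ * Real.exp (-(t ^ 2) / 2)

/-- The joint CDF of a bivariate standard Gaussian vector with correlation `ρ`. -/
noncomputable def bvnCDF (ρ x y : ℝ) : ℝ :=
  ∫ s in Set.Iic x, ∫ t in Set.Iic y,
    (2 * Real.pi * Real.sqrt (1 - ρ ^ 2))⁻¹ *
      Real.exp (-(s ^ 2 - 2 * ρ * s * t + t ^ 2) / (2 * (1 - ρ ^ 2)))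

open ProbabilityTheory Set

local notation "φ" => gaussianPDFReal 0 1

lemma gaussianPDFReal_zero_one (t : ℝ) : φ t = (√(2 * π))⁻¹ * exp (-(t ^ 2) / 2) := by
  simp [gaussianPDFReal]

lemma integrable_gaussianPDFReal_zero_one : Integrable φ := integrable_gaussianPDFReal 0 1

lemma gaussianPDFReal_zero_one_le_one (t : ℝ) : φ t ≤ 1 := by
  have h2π : 1 ≤ √(2 * π) := Real.one_le_sqrt.2 (by linarith [pi_gt_three])
  rw [gaussianPDFReal_zero_one]
  exact mul_le_one₀ (inv_le_one_of_one_le₀ h2π) (exp_pos _).le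
    (exp_le_one_iff.2 (by nlinarith [sq_nonneg t]))

lemma gaussianPDFReal_zero_one_antitoneOn : AntitoneOn φ (Ici 0) := fun s hs t _ hst => by
  simp only [gaussianPDFReal_zero_one]
  gcongr

lemma stdCDF_eq_integral (x : ℝ) : stdCDF x = ∫ t in Iic x, φ t := by
  simp only [stdCDF, gaussianPDFReal_zero_one]

lemma stdCDF_sub_stdCDF (a c : ℝ) : stdCDF c - stdCDF a = ∫ t in a..c, φ t := by
  simp only [stdCDF_eq_integral]
  exact intervalIntegral.integral_Iic_sub_Iic integrable_gaussianPDFReal_zero_one.integrableOn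
    integrable_gaussianPDFReal_zero_one.integrableOn

lemma one_sub_stdCDF_eq_integral (a : ℝ) : 1 - stdCDF a = ∫ t in Ioi a, φ t := by
  rw [← integral_gaussianPDFReal_eq_one 0 one_ne_zero, stdCDF_eq_integral,
    ← intervalIntegral.integral_Iic_add_Ioi integrable_gaussianPDFReal_zero_one.integrableOn
      integrable_gaussianPDFReal_zero_one.integrableOn, add_sub_cancel_left]

lemma stdCDF_monotone : Monotone stdCDF := fun a c h =>
  sub_nonneg.1 <| (stdCDF_sub_stdCDF a c).symm ▸
    intervalIntegral.integral_nonneg h fun t _ => gaussianPDFReal_nonneg 0 1 t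

lemma abs_stdCDF_sub_stdCDF_le (a c : ℝ) : |stdCDF a - stdCDF c| ≤ |a - c| := by
  rw [stdCDF_sub_stdCDF, ← Real.norm_eq_abs, ← one_mul |a - c|]
  exact intervalIntegral.norm_integral_le_of_norm_le_const fun t _ => by
    rw [Real.norm_of_nonneg (gaussianPDFReal_nonneg 0 1 t)]
    exact gaussianPDFReal_zero_one_le_one t

lemma hasDerivAt_neg_gaussianPDFReal_zero_one (t : ℝ) :
    HasDerivAt (fun u => -φ u) (t * φ t) t := by
  have h : HasDerivAt (fun u : ℝ => -(u ^ 2) / 2) (-t) t :=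
    ((hasDerivAt_pow 2 t).neg.div_const 2).congr_deriv (by ring)
  simp only [gaussianPDFReal_zero_one]
  exact (h.exp.const_mul _).neg.congr_deriv (by ring)

lemma tendsto_gaussianPDFReal_zero_one_atTop : Tendsto φ atTop (nhds 0) := by
  have h : Tendsto (fun t : ℝ => -(t ^ 2) / 2) atTop atBot :=
    (tendsto_neg_atTop_atBot.comp (tendsto_pow_atTop two_ne_zero)).atBot_div_const two_pos
  simpa [funext gaussianPDFReal_zero_one] using
    (tendsto_exp_atBot.comp h).const_mul (√(2 * π))⁻¹

lemma integrableOn_mul_gaussianPDFReal_zero_one {a : ℝ} (ha : 0 ≤ a) :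
    IntegrableOn (fun t => t * φ t) (Ioi a) :=
  integrableOn_Ioi_deriv_of_nonneg' (fun t _ => hasDerivAt_neg_gaussianPDFReal_zero_one t)
    (fun t ht => mul_nonneg (ha.trans ht.le) (gaussianPDFReal_nonneg 0 1 t))
    (neg_zero (G := ℝ) ▸ tendsto_gaussianPDFReal_zero_one_atTop.neg)

lemma integral_Ioi_mul_gaussianPDFReal_zero_one {a : ℝ} (ha : 0 ≤ a) :
    ∫ t in Ioi a, t * φ t = φ a := by
  rw [integral_Ioi_of_hasDerivAt_of_tendsto' (fun t _ => hasDerivAt_neg_gaussianPDFReal_zero_one t)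
    (integrableOn_mul_gaussianPDFReal_zero_one ha) tendsto_gaussianPDFReal_zero_one_atTop.neg,
    neg_zero, zero_sub, neg_neg]

lemma one_sub_stdCDF_le {a : ℝ} (ha : 0 < a) : 1 - stdCDF a ≤ φ a / a := by
  rw [one_sub_stdCDF_eq_integral, ← integral_Ioi_mul_gaussianPDFReal_zero_one ha.le,
    div_eq_inv_mul, ← integral_const_mul]
  refine setIntegral_mono_on integrable_gaussianPDFReal_zero_one.integrableOn
    ((integrableOn_mul_gaussianPDFReal_zero_one ha.le).const_mul _) measurableSet_Ioi
    fun t ht => ?_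
  rw [le_inv_mul_iff₀ ha]
  exact mul_le_mul_of_nonneg_right ht.le (gaussianPDFReal_nonneg 0 1 t)

lemma exp_mul_div_le_one_sub_stdCDF {a : ℝ} (ha : 1 ≤ a) :
    exp (-(3 / 2)) * φ a / a ≤ 1 - stdCDF a := by
  have ha0 : 0 < a := by linarith
  -- on `(a, a + 1/a]` the density is at least `φ (a + 1/a) ≥ exp (-3/2) * φ a`
  have hφ : exp (-(3 / 2)) * φ a ≤ φ (a + a⁻¹) := by
    have hinv : a⁻¹ ^ 2 ≤ 1 := pow_le_one₀ (by positivity) (inv_le_one_of_one_le₀ ha)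
    simp only [gaussianPDFReal_zero_one]
    rw [mul_left_comm, ← exp_add]
    gcongr
    nlinarith [mul_inv_cancel₀ ha0.ne']
  calc exp (-(3 / 2)) * φ a / a ≤ φ (a + a⁻¹) * volume.real (Ioc a (a + a⁻¹)) := by
        rw [Real.volume_real_Ioc_of_le (by simp [ha0.le]), add_sub_cancel_left, div_eq_mul_inv]
        gcongr
    _ ≤ ∫ t in Ioc a (a + a⁻¹), φ t :=
        setIntegral_ge_of_const_le_real measurableSet_Ioc measure_Ioc_lt_top.ne
          (fun t ht => gaussianPDFReal_zero_one_antitoneOn (mem_Ici.2 (by linarith [ht.1]))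
            (mem_Ici.2 (by positivity)) ht.2)
          integrable_gaussianPDFReal_zero_one.integrableOn
    _ ≤ ∫ t in Ioi a, φ t :=
        setIntegral_mono_set integrable_gaussianPDFReal_zero_one.integrableOn
          (Eventually.of_forall (gaussianPDFReal_nonneg 0 1)) Ioc_subset_Ioi_self.eventuallyLE
    _ = 1 - stdCDF a := (one_sub_stdCDF_eq_integral a).symm

lemma log_le_div_eight {L : ℝ} (hL : 256 ≤ L) : log L ≤ L / 8 := by
  have h := log_le_rpow_div (by linarith : 0 ≤ L) (by norm_num : (0 : ℝ) < 1 / 2)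
  rw [← sqrt_eq_rpow] at h
  have hs : 16 ≤ √L := Real.le_sqrt_of_sq_le (by linarith)
  nlinarith [Real.sq_sqrt (by linarith : 0 ≤ L)]

lemma sqrt_two_mul_pi_lt_three : √(2 * π) < 3 :=
  (Real.sqrt_lt' three_pos).2 (by nlinarith [pi_lt_d2])

lemma exp_three_halves_lt_eight : exp (3 / 2) < 8 := by
  calc exp (3 / 2) < exp 1 * exp 1 := by rw [← exp_add]; exact exp_lt_exp.2 (by norm_num)
    _ < 8 := by nlinarith [exp_one_lt_d9, exp_pos 1]

lemma sq_le_of_one_sub_stdCDF_eq_exp_neg {b L : ℝ} (hb : 0 < b) (hL : 1 ≤ L)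
    (h : 1 - stdCDF b = exp (-L)) : b ^ 2 ≤ 2 * L := by
  set a := √(2 * L)
  have ha2 : a ^ 2 = 2 * L := Real.sq_sqrt (by linarith)
  have ha1 : 1 ≤ a := Real.le_sqrt_of_sq_le (by linarith)
  suffices b ≤ a by nlinarith
  by_contra! hab
  have hφa : φ a = (√(2 * π))⁻¹ * exp (-L) := by
    rw [gaussianPDFReal_zero_one, ha2]
    ring_nf
  have hlt : 1 - stdCDF a < exp (-L) :=
    calc 1 - stdCDF a ≤ φ a / a := one_sub_stdCDF_le (by linarith)
      _ ≤ φ a := div_le_self (gaussianPDFReal_nonneg 0 1 a) ha1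
      _ < exp (-L) := by
        rw [hφa]
        refine mul_lt_of_lt_one_left (exp_pos _) (inv_lt_one_of_one_lt₀ ?_)
        exact Real.lt_sqrt_of_sq_lt (by linarith [pi_gt_three])
  linarith [stdCDF_monotone hab.le]

lemma le_sq_of_one_sub_stdCDF_eq_exp_neg {b L : ℝ} (hL : 256 ≤ L)
    (h : 1 - stdCDF b = exp (-L)) : 2 * L - 4 * log L ≤ b ^ 2 := by
  have hlog₀ := log_nonneg (by linarith : (1 : ℝ) ≤ L)
  have hlog := log_le_div_eight hL
  set a := √(2 * L - 4 * log L)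
  have ha2 : a ^ 2 = 2 * L - 4 * log L := Real.sq_sqrt (by linarith)
  have ha1 : 1 ≤ a := Real.le_sqrt_of_sq_le (by linarith)
  have haL : a ≤ L := by nlinarith
  suffices a ≤ b by nlinarith
  by_contra! hba
  have hφa : φ a = (√(2 * π))⁻¹ * L ^ 2 * exp (-L) := by
    rw [gaussianPDFReal_zero_one, ha2, show -(2 * L - 4 * log L) / 2 = log (L ^ 2) + -L by
      rw [log_pow]; push_cast; ring, exp_add, exp_log (by positivity)]
    ring
  have hconst : a * √(2 * π) * exp (3 / 2) < L ^ 2 :=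
    calc a * √(2 * π) * exp (3 / 2) ≤ L * 3 * exp (3 / 2) := by
          gcongr
          exact sqrt_two_mul_pi_lt_three.le
      _ < L * 3 * 8 := by gcongr; exact exp_three_halves_lt_eight
      _ ≤ L ^ 2 := by nlinarith
  have hlt : exp (-L) < 1 - stdCDF a :=
    calc exp (-L) < exp (-(3 / 2)) * φ a / a := by
          rw [hφa, lt_div_iff₀ (by linarith), exp_neg (3 / 2)]
          field_simp
          nlinarith [exp_pos (-L)]
      _ ≤ 1 - stdCDF a := exp_mul_div_le_one_sub_stdCDF ha1
  linarith [stdCDF_monotone hba.le]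

lemma sub_mul_div_sqrt_eq {b ε : ℝ} (x z : ℝ) (hb : b ≠ 0) (hε : 0 < ε) (hε2 : ε < 2) :
    ((b + x / b) - (1 - ε) * (b + z / b)) / √(1 - (1 - ε) ^ 2)
      = (x - z) / (b * √(ε * (2 - ε))) + b * √(ε * (2 - ε)) / (2 - ε)
        + ε * z / (b * √(ε * (2 - ε))) := by
  have hX : 0 < ε * (2 - ε) := mul_pos hε (by linarith)
  have hs := Real.sq_sqrt hX.le
  rw [show 1 - (1 - ε) ^ 2 = ε * (2 - ε) by ring]
  have h2ε : 2 - ε ≠ 0 := by linarith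
  field_simp
  linear_combination (-b ^ 2) * hs

lemma abs_add_add_sub_le {q P D ε : ℝ} (x z : ℝ) (hq : 0 < q) (hD : D ≤ 1 / 2) (hε : 0 ≤ ε)
    (hε1 : ε ≤ 1) (hP : 2 * q * (1 - D) ≤ P) (hP' : P ≤ 2 * q) :
    |(x - z) / P + P / (2 - ε) + ε * z / P - (q + (x - z) / (2 * q))|
      ≤ |x - z| * D / q + q * (2 * D + ε) + ε * |z| / q := by
  have hqP : q ≤ P := by nlinarith
  have hP0 : 0 < P := hq.trans_le hqP
  have hD0 : 0 ≤ D := by nlinarith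
  have h₁ : |(x - z) * (1 / P - 1 / (2 * q))| ≤ |x - z| * D / q := by
    rw [abs_mul, mul_div_assoc]
    gcongr
    rw [abs_of_nonneg (sub_nonneg.2 (one_div_le_one_div_of_le hP0 hP')),
      div_sub_div _ _ hP0.ne' (by positivity), div_le_div_iff₀ (by positivity) hq]
    nlinarith
  have h₂ : |P / (2 - ε) - q| ≤ q * (2 * D + ε) := by
    have h2ε : 2 - ε ≠ 0 := by linarith
    rw [show P / (2 - ε) - q = (P - 2 * q + q * ε) / (2 - ε) by field_simp; ring, abs_div,
      abs_of_pos (by linarith : 0 < 2 - ε)]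
    have h2D : q * (2 * D + ε) ≤ q * (2 * D + ε) * (2 - ε) :=
      le_mul_of_one_le_right (by positivity) (by linarith)
    rw [div_le_iff₀ (by linarith), abs_le]
    constructor <;> nlinarith
  have h₃ : |ε * z / P| ≤ ε * |z| / q := by
    rw [abs_div, abs_mul, abs_of_nonneg hε, abs_of_pos hP0]
    gcongr
  calc _ = |(x - z) * (1 / P - 1 / (2 * q)) + (P / (2 - ε) - q) + ε * z / P| := by ring_nf
    _ ≤ _ := (abs_add_three _ _ _).trans (by linarith)

lemma mul_sqrt_mem_Icc {b q L ε : ℝ} (hb : 0 < b) (hq : 0 ≤ q) (hL : 1 ≤ L)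
    (hqε : q ^ 2 = L * ε) (hε2 : ε ≤ 2) (hb₁ : 2 * L - 4 * log L ≤ b ^ 2) (hb₂ : b ^ 2 ≤ 2 * L)
    (hD : 2 * (log L / L) + ε / 2 ≤ 1) :
    b * √(ε * (2 - ε)) ∈ Icc (2 * q * (1 - (2 * (log L / L) + ε / 2))) (2 * q) := by
  have hL0 : 0 < L := by linarith
  set a := log L / L with ha
  have hLa : L * a = log L := by rw [ha]; field_simp
  have hε0 : 0 ≤ ε := nonneg_of_mul_nonneg_right (hqε ▸ sq_nonneg q) hL0
  have ha0 : 0 ≤ a := by have := log_nonneg hL; positivity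
  rw [← abs_of_pos hb, ← Real.sqrt_sq_eq_abs, ← Real.sqrt_mul (sq_nonneg b)]
  constructor
  · refine Real.le_sqrt_of_sq_le ?_
    have h₁ : (2 * q * (1 - (2 * a + ε / 2))) ^ 2 ≤ 4 * q ^ 2 * (1 - (2 * a + ε / 2)) := by
      nlinarith [mul_nonneg (mul_nonneg (sq_nonneg q) (sub_nonneg.2 hD)) (add_nonneg ha0 hε0)]
    have h₂ : 4 * q ^ 2 * (1 - (2 * a + ε / 2)) ≤ 2 * L * (1 - 2 * a) * (ε * (2 - ε)) := by
      rw [hqε]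
      nlinarith [mul_nonneg (mul_nonneg hL0.le ha0) (mul_nonneg hε0 hε0)]
    have h₃ : 2 * L * (1 - 2 * a) * (ε * (2 - ε)) ≤ b ^ 2 * (ε * (2 - ε)) := by
      gcongr
      nlinarith
    linarith
  · rw [Real.sqrt_le_left (by positivity)]
    nlinarith [mul_le_mul_of_nonneg_right hb₂ (mul_nonneg hε0 (by linarith : 0 ≤ 2 - ε))]

lemma abs_threshold_sub_limit_le {δ M μ L b : ℝ} (x z : ℝ) (hδ : 0 < δ) (hδμ : δ ≤ μ)
    (hμM : μ ≤ M) (hL : 256 ≤ L) (hML : 2 * M ≤ L) (hb : 0 < b)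
    (hb₁ : 2 * L - 4 * log L ≤ b ^ 2) (hb₂ : b ^ 2 ≤ 2 * L) :
    |((b + x / b) - (1 - μ / L) * (b + z / b)) / √(1 - (1 - μ / L) ^ 2)
        - (√μ + (x - z) / (2 * √μ))|
      ≤ ((1 + |x|) * (2 + M / 2) / √δ + √M * (5 + 2 * M)) * (1 + |z|) * (log L / L) := by
  have hμ : 0 < μ := hδ.trans_le hδμ
  have hM : 0 < M := hμ.trans_le hμM
  have hL0 : 0 < L := by linarith
  have hlog₁ : 1 ≤ log L := by
    rw [le_log_iff_exp_le hL0]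
    linarith [exp_one_lt_d9]
  have hlog₂ := log_le_div_eight hL
  have hq : 0 < √μ := Real.sqrt_pos.2 hμ
  have hqδ : √δ ≤ √μ := Real.sqrt_le_sqrt hδμ
  have hqM : √μ ≤ √M := Real.sqrt_le_sqrt hμM
  have hqε : √μ ^ 2 = L * (μ / L) := by rw [Real.sq_sqrt hμ.le]; field_simp
  have hLG : 1 / L ≤ log L / L := div_le_div_of_nonneg_right hlog₁ hL0.le
  have hεM : μ / L ≤ M / L := div_le_div_of_nonneg_right hμM hL0.le
  have hML' : M / L ≤ 1 / 2 := by rw [div_le_iff₀ hL0]; linarith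
  have hεG : μ / L ≤ M * (log L / L) := hεM.trans (by rw [mul_div_assoc']; gcongr; nlinarith)
  have hG8 : log L / L ≤ 1 / 8 := by rw [div_le_iff₀ hL0]; linarith
  have hG0 : 0 < log L / L := by positivity
  have hε0 : 0 < μ / L := by positivity
  set G := log L / L
  set ε := μ / L
  have hD : 2 * G + ε / 2 ≤ 1 / 2 := by linarith
  obtain ⟨hP₁, hP₂⟩ := mul_sqrt_mem_Icc hb hq.le (by linarith) hqε (by linarith) hb₁ hb₂
    (by linarith)
  rw [sub_mul_div_sqrt_eq x z hb.ne' hε0 (by linarith)]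
  refine (abs_add_add_sub_le x z hq hD hε0.le (by linarith) hP₁ hP₂).trans ?_
  have h₁ : |x - z| * (2 * G + ε / 2) / √μ ≤ (1 + |x|) * (1 + |z|) * ((2 + M / 2) * G) / √δ := by
    refine div_le_div₀ (by positivity) (mul_le_mul ?_ (by nlinarith) (by positivity)
      (by positivity)) (Real.sqrt_pos.2 hδ) hqδ
    nlinarith [abs_sub x z, abs_nonneg x, abs_nonneg z]
  have h₂ : √μ * (2 * (2 * G + ε / 2) + ε) ≤ √M * ((4 + 2 * M) * G) :=
    mul_le_mul hqM (by linarith) (by positivity) (Real.sqrt_nonneg M)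
  have h₃ : ε * |z| / √μ ≤ √M * G * |z| := by
    have hεq : ε / √μ = √μ * (1 / L) := by
      rw [div_eq_iff hq.ne']
      field_simp
      linear_combination -hqε
    rw [mul_comm ε, mul_div_assoc, hεq, mul_comm]
    gcongr
  have hA : (1 + |x|) * (1 + |z|) * ((2 + M / 2) * G) / √δ
      = (1 + |x|) * (2 + M / 2) / √δ * (1 + |z|) * G := by ring
  nlinarith [mul_nonneg (mul_nonneg (Real.sqrt_nonneg M) hG0.le)
    (by positivity : 0 ≤ 1 + (4 + 2 * M) * |z|)]

/-- uniform bound on the error of replacing the argument of `Φ` by its limit. -/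
theorem stmt8 (m : ℝ → ℝ) (hmpos : ∀ t ∈ Set.Icc (0 : ℝ) 1, 0 < m t)
    (hmcont : ContinuousOn m (Set.Icc (0 : ℝ) 1))
    (b : ℕ → ℝ)
    (hb : ∀ n : ℕ, 2 ≤ n → 0 < b n ∧ 1 - stdCDF (b n) = 1 / n)
    (x : ℝ) :
    ∃ C > (0 : ℝ), ∃ N : ℕ, ∀ n ≥ N, ∀ i ∈ Finset.Icc 1 n, ∀ z : ℝ,
      |stdCDF (((b n + x / b n) - (1 - m ((i : ℝ) / n) / Real.log n) * (b n + z / b n)) /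
          Real.sqrt (1 - (1 - m ((i : ℝ) / n) / Real.log n) ^ 2))
        - stdCDF (Real.sqrt (m ((i : ℝ) / n)) + (x - z) / (2 * Real.sqrt (m ((i : ℝ) / n))))|
      ≤ C * (1 + |z|) * (Real.log (Real.log n) / Real.log n) := by
  obtain ⟨t₀, ht₀, hmin⟩ := isCompact_Icc.exists_isMinOn (nonempty_Icc.2 zero_le_one) hmcont
  obtain ⟨t₁, ht₁, hmax⟩ := isCompact_Icc.exists_isMaxOn (nonempty_Icc.2 zero_le_one) hmcont
  have hδ := hmpos t₀ ht₀
  have hM := hmpos t₁ ht₁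
  obtain ⟨N, hN⟩ := (((tendsto_log_atTop.comp tendsto_natCast_atTop_atTop).eventually_ge_atTop
    (max 256 (2 * m t₁))).and (eventually_ge_atTop 2)).exists_forall_of_atTop
  refine ⟨(1 + |x|) * (2 + m t₁ / 2) / √(m t₀) + √(m t₁) * (5 + 2 * m t₁),
    add_pos_of_pos_of_nonneg (by positivity) (by positivity), N, fun n hn i hi z => ?_⟩
  obtain ⟨hL, hn2⟩ := hN n hn
  have hL₁ : 256 ≤ log n := le_of_max_le_left hL
  have hL₂ : 2 * m t₁ ≤ log n := le_of_max_le_right hL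
  obtain ⟨hbn, hbtail⟩ := hb n hn2
  have htail : 1 - stdCDF (b n) = exp (-log n) := by
    rw [hbtail, exp_neg, exp_log (by positivity), one_div]
  have hin : (i : ℝ) / n ∈ Icc 0 1 := by
    obtain ⟨-, hin⟩ := Finset.mem_Icc.1 hi
    exact ⟨by positivity, div_le_one_of_le₀ (by exact_mod_cast hin) (by positivity)⟩
  exact (abs_stdCDF_sub_stdCDF_le _ _).trans <| abs_threshold_sub_limit_le x z hδ (hmin hin)
    (hmax hin) hL₁ hL₂ hbn
    (le_sq_of_one_sub_stdCDF_eq_exp_neg hL₁ htail)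
    (sq_le_of_one_sub_stdCDF_eq_exp_neg hbn (by linarith) htail)
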